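/- arXiv:0912.4964 — 2 statements merged into one kernel-verified Lean document; each statement's English description precedes it below -/
import Mathlib

section
/- Let c, δ > 0 and L' > L, and suppose a C² function γ₁ : [0, (L'-L)/8] → ℝ satisfies |γ₁''(t)| < 4√c/(L'-L), γ₁'(0) > √(8√c·δ/(L'-L)), L'-L > 1, and c > 1024·δ². Then with t₀ = √(δ(L'-L)/(2√c)), one has t₀ ≤ (L'-L)/8 and γ₁(t₀) - γ₁(0) > δ. -/
/-- Quantitative core of Claim 6: a C² curve coordinate on `[0,(L'-L)/8]` with
`|γ₁''| < 4√c/(L'-L)` and `γ₁'(0) > √(8√c δ/(L'-L))`, where `L'-L > 1` and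
`c > 1024 δ²`, satisfies `t₀ ≤ (L'-L)/8` and `γ₁(t₀) - γ₁(0) > δ`
for `t₀ = √(δ(L'-L)/(2√c))`. -/
theorem stmt2 (c δ L L' : ℝ) (hc : 0 < c) (hδ : 0 < δ) (hL : L < L')
    (h1 : 1 < L' - L) (h2 : 1024 * δ ^ 2 < c)
    (γ₁ γ₁' γ₁'' : ℝ → ℝ)
    (hd1 : ∀ t ∈ Set.Icc (0:ℝ) ((L' - L) / 8),
        HasDerivWithinAt γ₁ (γ₁' t) (Set.Icc 0 ((L' - L) / 8)) t)
    (hd2 : ∀ t ∈ Set.Icc (0:ℝ) ((L' - L) / 8),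
        HasDerivWithinAt γ₁' (γ₁'' t) (Set.Icc 0 ((L' - L) / 8)) t)
    (hcont : ContinuousOn γ₁'' (Set.Icc 0 ((L' - L) / 8)))
    (hbound : ∀ t ∈ Set.Icc (0:ℝ) ((L' - L) / 8),
        |γ₁'' t| < 4 * Real.sqrt c / (L' - L))
    (hinit : γ₁' 0 > Real.sqrt (8 * Real.sqrt c * δ / (L' - L))) :
    Real.sqrt (δ * (L' - L) / (2 * Real.sqrt c)) ≤ (L' - L) / 8 ∧
    γ₁ (Real.sqrt (δ * (L' - L) / (2 * Real.sqrt c))) - γ₁ 0 > δ := by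
  set S : ℝ := L' - L with hS
  clear_value S
  have hS0 : 0 < S := by linarith
  have hsc : 0 < Real.sqrt c := Real.sqrt_pos.mpr hc
  set M : ℝ := 4 * Real.sqrt c / S with hM
  have hM0 : 0 < M := by positivity
  set t₀ : ℝ := Real.sqrt (δ * S / (2 * Real.sqrt c)) with ht₀
  have harg0 : 0 < δ * S / (2 * Real.sqrt c) := by positivity
  have ht₀pos : 0 < t₀ := Real.sqrt_pos.mpr harg0
  have ht₀sq : t₀ ^ 2 = δ * S / (2 * Real.sqrt c) := Real.sq_sqrt harg0.le
  -- √c > 32 δ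
  have hsc32 : 32 * δ < Real.sqrt c := by
    have : (32 * δ) ^ 2 < c := by nlinarith
    nlinarith [Real.sq_sqrt hc.le, Real.sqrt_nonneg c]
  -- t₀ ≤ S / 8
  have hT : t₀ ≤ S / 8 := by
    have harg : δ * S / (2 * Real.sqrt c) ≤ (S / 8) ^ 2 := by
      rw [div_le_iff₀ (by positivity)]
      have h32 : 32 * δ ≤ Real.sqrt c * S := by nlinarith
      nlinarith [mul_le_mul_of_nonneg_left h32 hS0.le]
    calc t₀ ≤ Real.sqrt ((S / 8) ^ 2) := Real.sqrt_le_sqrt harg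
      _ = S / 8 := Real.sqrt_sq (by positivity)
  refine ⟨hT, ?_⟩
  have ht₀mem : t₀ ∈ Set.Icc (0:ℝ) (S / 8) := ⟨ht₀pos.le, hT⟩
  have hIcc : Convex ℝ (Set.Icc (0:ℝ) (S / 8)) := convex_Icc _ _
  have hint : interior (Set.Icc (0:ℝ) (S / 8)) = Set.Ioo 0 (S / 8) := interior_Icc
  have hsub : Set.Ioo (0:ℝ) (S / 8) ⊆ Set.Icc 0 (S / 8) := Set.Ioo_subset_Icc_self
  -- Step A: γ₁' t ≥ γ₁' 0 - M t on the interval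
  have hcontγ₁' : ContinuousOn γ₁' (Set.Icc 0 (S / 8)) :=
    fun t ht => (hd2 t ht).continuousWithinAt
  have stepA : ∀ t ∈ Set.Icc (0:ℝ) (S / 8), γ₁' 0 - M * t ≤ γ₁' t := by
    have hmono : MonotoneOn (fun t => γ₁' t + M * t) (Set.Icc 0 (S / 8)) := by
      apply monotoneOn_of_hasDerivWithinAt_nonneg hIcc
        (f' := fun t => γ₁'' t + M)
      · exact hcontγ₁'.add (continuousOn_const.mul continuousOn_id)
      · intro x hx
        rw [hint] at hx ⊢
        have hlin : HasDerivWithinAt (fun t : ℝ => M * t) M (Set.Ioo 0 (S / 8)) x := by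
          simpa using ((hasDerivAt_id x).const_mul M).hasDerivWithinAt (s := Set.Ioo 0 (S / 8))
        exact ((hd2 x (hsub hx)).mono hsub).add hlin
      · intro x hx
        rw [hint] at hx
        have := hbound x (hsub hx)
        have := abs_lt.mp this
        linarith [this.1]
    intro t ht
    have h0 : (0:ℝ) ∈ Set.Icc (0:ℝ) (S / 8) := ⟨le_refl 0, by positivity⟩
    have := hmono h0 ht ht.1
    simp only [mul_zero, add_zero] at this
    linarith
  -- Step B: γ₁ t₀ - γ₁ 0 ≥ γ₁' 0 * t₀ - M t₀² / 2
  have stepB : γ₁ 0 ≤ γ₁ t₀ - γ₁' 0 * t₀ + M * t₀ ^ 2 / 2 := by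
    have hmono : MonotoneOn (fun t => γ₁ t - γ₁' 0 * t + M * t ^ 2 / 2)
        (Set.Icc 0 (S / 8)) := by
      apply monotoneOn_of_hasDerivWithinAt_nonneg hIcc
        (f' := fun t => γ₁' t - γ₁' 0 + M * t)
      · have hcγ : ContinuousOn γ₁ (Set.Icc 0 (S / 8)) :=
          fun t ht => (hd1 t ht).continuousWithinAt
        fun_prop
      · intro x hx
        rw [hint] at hx ⊢
        have h1 := (hd1 x (hsub hx)).mono hsub
        have h2 : HasDerivWithinAt (fun t : ℝ => γ₁' 0 * t) (γ₁' 0)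
            (Set.Ioo 0 (S / 8)) x := by
          simpa using ((hasDerivAt_id x).const_mul (γ₁' 0)).hasDerivWithinAt
            (s := Set.Ioo 0 (S / 8))
        have h3 : HasDerivWithinAt (fun t : ℝ => M * t ^ 2 / 2) (M * x)
            (Set.Ioo 0 (S / 8)) x := by
          have : HasDerivWithinAt (fun t : ℝ => M * t ^ 2 / 2) (M * (((2:ℕ):ℝ) * x ^ (2 - 1)) / 2)
              (Set.Ioo 0 (S / 8)) x :=
            (((hasDerivAt_pow 2 x).const_mul M).div_const 2).hasDerivWithinAt
            (s := Set.Ioo 0 (S / 8))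
          convert this using 1
          ring
        exact (h1.sub h2).add h3
      · intro x hx
        rw [hint] at hx
        have := stepA x (hsub hx)
        linarith
    have h0 : (0:ℝ) ∈ Set.Icc (0:ℝ) (S / 8) := ⟨le_refl 0, by positivity⟩
    have := hmono h0 ht₀mem ht₀pos.le
    simpa using this
  -- numeric identities
  have hMt : M * t₀ ^ 2 / 2 = δ := by
    rw [ht₀sq, hM]
    field_simp
    ring
  have hvt : Real.sqrt (8 * Real.sqrt c * δ / S) * t₀ = 2 * δ := by
    rw [ht₀, ← Real.sqrt_mul (by positivity)]
    have : 8 * Real.sqrt c * δ / S * (δ * S / (2 * Real.sqrt c)) = (2 * δ) ^ 2 := by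
      field_simp
      ring
    rw [this, Real.sqrt_sq (by positivity)]
  have hinit' : γ₁' 0 * t₀ > 2 * δ := by
    calc γ₁' 0 * t₀ > Real.sqrt (8 * Real.sqrt c * δ / S) * t₀ := by
          exact mul_lt_mul_of_pos_right hinit ht₀pos
      _ = 2 * δ := hvt
  linarith
end

section
/- Let Π : [0,S] × [0,T] → ℝ² be continuous. Suppose: π₁(0,0) > 0 and π₂(0,0) > 0; π₁(0,T) > 0 and π₂(0,T) < 0; π₁(S,0) < 0 and π₂(S,0) = 0; for each fixed β₅, π₁(·,β₅) is strictly decreasing and π₂(·,β₅) is strictly decreasing; for each fixed β₃, π₁(β₃,·) is strictly increasing and π₂(β₃,·) is strictly decreasing. Then Π has a zero in the open rectangle (0,S) × (0,T). -/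
open Set in
/-- A strictly monotone function on `[A,B]` that is surjective onto `[f A, f B]`
is continuous on `[A,B]`. -/
lemma mono_surj_cont {f : ℝ → ℝ} {A B : ℝ} (hAB : A < B)
    (hf : StrictMonoOn f (Icc A B))
    (hsurj : ∀ y ∈ Icc (f A) (f B), ∃ x ∈ Icc A B, f x = y) :
    ContinuousOn f (Icc A B) := by
  intro a ha
  have hmemA := left_mem_Icc.2 hAB.le
  have hmemB := right_mem_Icc.2 hAB.le
  have hright : a < B → ContinuousWithinAt f (Ici a) a := by
    intro haB
    refine hf.continuousWithinAt_right_of_exists_between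
      (Icc_mem_nhdsGE_of_mem ⟨ha.1, haB⟩) ?_
    intro b hb
    by_cases hbB : f B ≤ b
    · exact ⟨B, hmemB, hf ha hmemB haB, hbB⟩
    · obtain ⟨x, hx, hfx⟩ := hsurj b ⟨(hf.monotoneOn hmemA ha ha.1).trans hb.le,
        (not_le.1 hbB).le⟩
      refine ⟨x, hx, ?_⟩; rw [hfx]; exact ⟨hb, le_refl b⟩
  have hleft : A < a → ContinuousWithinAt f (Iic a) a := by
    intro hAa
    refine hf.continuousWithinAt_left_of_exists_between
      (Icc_mem_nhdsLE_of_mem ⟨hAa, ha.2⟩) ?_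
    intro b hb
    by_cases hbA : b ≤ f A
    · exact ⟨A, hmemA, hbA, hf hmemA ha hAa⟩
    · obtain ⟨x, hx, hfx⟩ := hsurj b ⟨(not_le.1 hbA).le,
        (hb.le.trans (hf.monotoneOn ha hmemB ha.2))⟩
      refine ⟨x, hx, ?_⟩; rw [hfx]; exact ⟨le_refl b, hb⟩
  rcases eq_or_lt_of_le ha.1 with h1 | h1
  · subst h1; exact (hright hAB).mono Icc_subset_Ici_self
  rcases eq_or_lt_of_le ha.2 with h2 | h2
  · subst h2; exact (hleft h1).mono Icc_subset_Iic_self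
  · exact (continuousAt_iff_continuous_left_right.2 ⟨hleft h1, hright h2⟩).continuousWithinAt

open Set in
/-- Antitone version of `mono_surj_cont`. -/
lemma anti_surj_cont {f : ℝ → ℝ} {A B : ℝ} (hAB : A < B)
    (hf : StrictAntiOn f (Icc A B))
    (hsurj : ∀ y ∈ Icc (f B) (f A), ∃ x ∈ Icc A B, f x = y) :
    ContinuousOn f (Icc A B) := by
  have hmono : StrictMonoOn (fun x => -f x) (Icc A B) := fun x hx y hy hxy =>
    neg_lt_neg (hf hx hy hxy)
  have hsurj' : ∀ y ∈ Icc (-f A) (-f B), ∃ x ∈ Icc A B, -f x = y := by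
    intro y hy
    obtain ⟨x, hx, hfx⟩ := hsurj (-y) ⟨le_neg_of_le_neg hy.2, neg_le_of_neg_le hy.1⟩
    exact ⟨x, hx, by rw [hfx]; ring⟩
  have := (mono_surj_cont hAB hmono hsurj').neg
  exact this.congr (fun x _ => by simp)

/-- Two-dimensional degree argument of Theorem 9.1: a continuous period map
`Π = (π₁, π₂)` on `[0,S] × [0,T]` with the stated corner signs and strict
monotonicity in each variable has a zero in the open rectangle. -/
theorem stmt5 (S T : ℝ) (hS : 0 < S) (hT : 0 < T) (π₁ π₂ : ℝ → ℝ → ℝ)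
    (hc : ContinuousOn (fun p : ℝ × ℝ => (π₁ p.1 p.2, π₂ p.1 p.2))
        (Set.Icc 0 S ×ˢ Set.Icc 0 T))
    (h00 : 0 < π₁ 0 0) (h00' : 0 < π₂ 0 0)
    (h0T : 0 < π₁ 0 T) (h0T' : π₂ 0 T < 0)
    (hS0 : π₁ S 0 < 0) (hS0' : π₂ S 0 = 0)
    (m1 : ∀ β₅ ∈ Set.Icc (0:ℝ) T, StrictAntiOn (fun β₃ => π₁ β₃ β₅) (Set.Icc 0 S))
    (m2 : ∀ β₃ ∈ Set.Icc (0:ℝ) S, StrictMonoOn (fun β₅ => π₁ β₃ β₅) (Set.Icc 0 T))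
    (m3 : ∀ β₅ ∈ Set.Icc (0:ℝ) T, StrictAntiOn (fun β₃ => π₂ β₃ β₅) (Set.Icc 0 S))
    (m4 : ∀ β₃ ∈ Set.Icc (0:ℝ) S, StrictAntiOn (fun β₅ => π₂ β₃ β₅) (Set.Icc 0 T)) :
    ∃ p ∈ Set.Ioo (0:ℝ) S ×ˢ Set.Ioo (0:ℝ) T, π₁ p.1 p.2 = 0 ∧ π₂ p.1 p.2 = 0 := by
  classical
  open Set in
  have h0S : (0:ℝ) ∈ Icc 0 S := left_mem_Icc.2 hS.le
  have hSS : S ∈ Icc (0:ℝ) S := right_mem_Icc.2 hS.le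
  have h0T'' : (0:ℝ) ∈ Icc 0 T := left_mem_Icc.2 hT.le
  have hTT : T ∈ Icc (0:ℝ) T := right_mem_Icc.2 hT.le
  have hc1 : ContinuousOn (fun p : ℝ × ℝ => π₁ p.1 p.2) (Icc 0 S ×ˢ Icc 0 T) :=
    continuous_fst.comp_continuousOn hc
  have hc2 : ContinuousOn (fun p : ℝ × ℝ => π₂ p.1 p.2) (Icc 0 S ×ˢ Icc 0 T) :=
    continuous_snd.comp_continuousOn hc
  have hcx : ∀ x ∈ Icc (0:ℝ) S, ContinuousOn (fun y => π₂ x y) (Icc 0 T) := by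
    intro x hx
    exact hc2.comp ((continuous_const.prodMk continuous_id).continuousOn)
      (fun y hy => ⟨hx, hy⟩)
  have hcy : ∀ y ∈ Icc (0:ℝ) T, ContinuousOn (fun x => π₂ x y) (Icc 0 S) := by
    intro y hy
    exact hc2.comp ((continuous_id.prodMk continuous_const).continuousOn)
      (fun x hx => ⟨hx, hy⟩)
  -- existence of the implicit curve
  have hex : ∀ x : ℝ, ∃ y : ℝ, x ∈ Icc (0:ℝ) S → y ∈ Icc (0:ℝ) T ∧ π₂ x y = 0 := by
    intro x
    by_cases hx : x ∈ Icc (0:ℝ) S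
    · have h1 : π₂ x T < 0 :=
        lt_of_le_of_lt ((m3 T hTT).antitoneOn h0S hx hx.1) h0T'
      have h2 : 0 ≤ π₂ x 0 := by
        have := (m3 0 h0T'').antitoneOn hx hSS hx.2
        simpa [hS0'] using this
      have := intermediate_value_Icc' hT.le (hcx x hx)
        (show (0:ℝ) ∈ Icc (π₂ x T) (π₂ x 0) from ⟨h1.le, h2⟩)
      obtain ⟨y, hy, hy0⟩ := this
      exact ⟨y, fun _ => ⟨hy, hy0⟩⟩
    · exact ⟨0, fun h => absurd h hx⟩
  choose f hf using hex
  -- uniqueness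
  have uniq : ∀ x ∈ Icc (0:ℝ) S, ∀ y ∈ Icc (0:ℝ) T, π₂ x y = 0 → y = f x := by
    intro x hx y hy h0
    obtain ⟨hfm, hf0⟩ := hf x hx
    by_contra hne
    rcases lt_or_gt_of_ne hne with h | h
    · have h' : π₂ x (f x) < π₂ x y := m4 x hx hy hfm h
      rw [h0, hf0] at h'; exact lt_irrefl 0 h'
    · have h' : π₂ x y < π₂ x (f x) := m4 x hx hfm hy h
      rw [h0, hf0] at h'; exact lt_irrefl 0 h'
  -- f is strictly antitone
  have fanti : StrictAntiOn f (Icc 0 S) := by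
    intro x hx y hy hxy
    by_contra hle
    push_neg at hle
    have h1 : π₂ y (f x) < π₂ x (f x) := m3 (f x) (hf x hx).1 hx hy hxy
    have h2 : π₂ y (f y) ≤ π₂ y (f x) := (m4 y hy).antitoneOn (hf x hx).1 (hf y hy).1 hle
    rw [(hf x hx).2] at h1
    rw [(hf y hy).2] at h2
    linarith
  have fS : f S = 0 := (uniq S hSS 0 h0T'' hS0').symm
  have f0pos : 0 < f 0 := by
    rcases eq_or_lt_of_le (hf 0 h0S).1.1 with h | h
    · exfalso
      have := (hf 0 h0S).2
      rw [← h] at this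
      exact absurd this.symm (ne_of_lt h00')
    · exact h
  -- surjectivity of f onto [f S, f 0]
  have hsurj : ∀ y ∈ Icc (f S) (f 0), ∃ x ∈ Icc (0:ℝ) S, f x = y := by
    intro y hy
    have hyT : y ∈ Icc (0:ℝ) T := ⟨fS ▸ hy.1, hy.2.trans (hf 0 h0S).1.2⟩
    have h1 : 0 ≤ π₂ 0 y := by
      have := (m4 0 h0S).antitoneOn hyT (hf 0 h0S).1 hy.2
      rw [(hf 0 h0S).2] at this; exact this
    have h2 : π₂ S y ≤ 0 := by
      have := (m4 S hSS).antitoneOn h0T'' hyT hyT.1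
      rw [hS0'] at this; exact this
    obtain ⟨x, hx, h0⟩ := intermediate_value_Icc' hS.le (hcy y hyT)
      (show (0:ℝ) ∈ Icc (π₂ S y) (π₂ 0 y) from ⟨h2, h1⟩)
    exact ⟨x, hx, (uniq x hx y hyT h0).symm⟩
  have fcont : ContinuousOn f (Icc 0 S) := anti_surj_cont hS fanti hsurj
  -- the function h x = π₁ x (f x)
  have hH : ContinuousOn (fun x => π₁ x (f x)) (Icc 0 S) :=
    hc1.comp (continuousOn_id.prodMk fcont) (fun x hx => ⟨hx, (hf x hx).1⟩)
  have hH0 : 0 < π₁ 0 (f 0) :=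
    h00.trans (m2 0 h0S h0T'' (hf 0 h0S).1 f0pos)
  have hHS : π₁ S (f S) < 0 := by rw [fS]; exact hS0
  obtain ⟨x, hx, hx0⟩ := intermediate_value_Icc' hS.le hH
    (show (0:ℝ) ∈ Icc (π₁ S (f S)) (π₁ 0 (f 0)) from ⟨hHS.le, hH0.le⟩)
  have hx0' : π₁ x (f x) = 0 := hx0
  have hxne0 : x ≠ 0 := fun h => by
    rw [h] at hx0'; exact absurd hx0' (ne_of_gt hH0)
  have hxneS : x ≠ S := fun h => by
    rw [h] at hx0'; exact absurd hx0' (ne_of_lt hHS)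
  have hx1 : 0 < x := lt_of_le_of_ne hx.1 (Ne.symm hxne0)
  have hx2 : x < S := lt_of_le_of_ne hx.2 hxneS
  have hfx1 : 0 < f x := by
    rcases eq_or_lt_of_le (hf x hx).1.1 with h | h
    · exfalso
      have h0 : π₂ x 0 = 0 := h.symm ▸ (hf x hx).2
      have h' : π₂ S 0 < π₂ x 0 := m3 0 h0T'' hx hSS hx2
      rw [hS0', h0] at h'
      exact lt_irrefl 0 h'
    · exact h
  have hfx2 : f x < T := by
    rcases eq_or_lt_of_le (hf x hx).1.2 with h | h
    · exfalso
      have h0 : π₂ x T = 0 := h ▸ (hf x hx).2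
      have h' : π₂ x T < π₂ 0 T := m3 T hTT h0S hx hx1
      rw [h0] at h'
      exact lt_irrefl 0 (h'.trans h0T')
    · exact h
  exact ⟨(x, f x), ⟨⟨hx1, hx2⟩, hfx1, hfx2⟩, hx0', (hf x hx).2⟩
end
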